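/- In the behavior of K_{n,m}(send, recv), a marking with k tokens in 'off' places is reachable if and only if 0 ≤ k ≤ n and (k = 0 or m ≥ 1); in particular, if m ≥ 1, for every k ≤ n there is a reachable marking with exactly k tokens in 'off' places. -/
import Mathlib


inductive OncePlace | on | off
deriving DecidableEq

inductive LoopPlace | free | busy
deriving DecidableEq

/-- the places of the behavior of `K_{n,m}(send, recv)`: a copy of the places
of `Once` for each of the `n` senders, and of the places of `Loop` for each of
the `m` receivers. -/
abbrev KPlace (n m : ℕ) := (Fin n × OncePlace) ⊕ (Fin m × LoopPlace)

/-- initial marking: every sender on `on`, every receiver on `free`. -/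
def kInit (n m : ℕ) : KPlace n m → ℕ
  | Sum.inl (_, OncePlace.on) => 1
  | Sum.inl (_, OncePlace.off) => 0
  | Sum.inr (_, LoopPlace.free) => 1
  | Sum.inr (_, LoopPlace.busy) => 0

/-- one firing step of the behavior of `K_{n,m}(send, recv)`: either a joint
`(send, recv)` transition along an edge `(u, v)`, consuming `(on, u)` and
`(free, v)` and producing `(off, u)` and `(busy, v)`, or an internal `handle`
transition of a receiver `v`, moving a token from `(busy, v)` to `(free, v)`. -/
def kStep (n m : ℕ) (μ μ' : KPlace n m → ℕ) : Prop :=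
  (∃ (u : Fin n) (v : Fin m),
    1 ≤ μ (Sum.inl (u, OncePlace.on)) ∧ 1 ≤ μ (Sum.inr (v, LoopPlace.free)) ∧
    μ' = fun p => μ p
      - (if p = Sum.inl (u, OncePlace.on) then 1 else 0)
      - (if p = Sum.inr (v, LoopPlace.free) then 1 else 0)
      + (if p = Sum.inl (u, OncePlace.off) then 1 else 0)
      + (if p = Sum.inr (v, LoopPlace.busy) then 1 else 0)) ∨
  (∃ v : Fin m,
    1 ≤ μ (Sum.inr (v, LoopPlace.busy)) ∧
    μ' = fun p => μ p
      - (if p = Sum.inr (v, LoopPlace.busy) then 1 else 0)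
      + (if p = Sum.inr (v, LoopPlace.free) then 1 else 0))

/-- marking with the first `k` senders switched to `off`, all receivers free. -/
def offMark (n m k : ℕ) : KPlace n m → ℕ
  | Sum.inl (u, OncePlace.on) => if u.val < k then 0 else 1
  | Sum.inl (u, OncePlace.off) => if u.val < k then 1 else 0
  | Sum.inr (_, LoopPlace.free) => 1
  | Sum.inr (_, LoopPlace.busy) => 0

lemma offMark_zero (n m : ℕ) : offMark n m 0 = kInit n m := by
  funext p
  rcases p with ⟨u, _ | _⟩ | ⟨v, _ | _⟩ <;> simp [offMark, kInit]

lemma offMark_reach (n m k : ℕ) (hk : k ≤ n) (hm : 1 ≤ m) :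
    Relation.ReflTransGen (kStep n m) (kInit n m) (offMark n m k) := by
  induction k with
  | zero => rw [offMark_zero]
  | succ k ih =>
    have hkn : k < n := hk
    have h1 := ih (le_of_lt hkn)
    set u : Fin n := ⟨k, hkn⟩
    set v : Fin m := ⟨0, hm⟩
    set ν : KPlace n m → ℕ := fun p => offMark n m k p
      - (if p = Sum.inl (u, OncePlace.on) then 1 else 0)
      - (if p = Sum.inr (v, LoopPlace.free) then 1 else 0)
      + (if p = Sum.inl (u, OncePlace.off) then 1 else 0)
      + (if p = Sum.inr (v, LoopPlace.busy) then 1 else 0) with hν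
    have step1 : kStep n m (offMark n m k) ν := by
      left
      exact ⟨u, v, by simp [offMark, u], by simp [offMark], rfl⟩
    have step2 : kStep n m ν (offMark n m (k + 1)) := by
      right
      refine ⟨v, by simp [hν, offMark], ?_⟩
      funext p
      rcases p with ⟨w, _ | _⟩ | ⟨w, _ | _⟩
      · rcases eq_or_ne w u with rfl | h <;> simp_all [offMark, u, Fin.ext_iff] <;> split_ifs <;> omega
      · rcases eq_or_ne w u with rfl | h <;> simp_all [offMark, u, Fin.ext_iff] <;> split_ifs <;> omega
      · rcases eq_or_ne w v with rfl | h <;> simp_all [offMark]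
      · rcases eq_or_ne w v with rfl | h <;> simp_all [offMark]
    exact (h1.tail step1).tail step2

lemma invariant (n m : ℕ) (μ : KPlace n m → ℕ)
    (h : Relation.ReflTransGen (kStep n m) (kInit n m) μ) :
    ∀ u : Fin n, μ (Sum.inl (u, OncePlace.on)) + μ (Sum.inl (u, OncePlace.off)) = 1 := by
  induction h with
  | refl => intro u; simp [kInit]
  | tail _ hstep ih =>
    rename_i μ₁ μ₂ _
    intro w
    rcases hstep with ⟨u, v, hon, hfree, rfl⟩ | ⟨v, hbusy, rfl⟩
    · have hw := ih w
      rcases eq_or_ne w u with rfl | h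
      · simp only [Sum.inl.injEq, Sum.inr.injEq, Prod.mk.injEq, reduceCtorEq, and_true,
          and_false, if_false, if_true, eq_self_iff_true, ite_true, ite_false, true_and]
        omega
      · simp only [Sum.inl.injEq, Sum.inr.injEq, Prod.mk.injEq, reduceCtorEq, and_true,
          and_false, if_false, if_true, if_neg h, ite_false]
        omega
    · simp [ih w]

lemma no_step_m0 (n : ℕ) (μ μ' : KPlace n 0 → ℕ) (h : kStep n 0 μ μ') : False := by
  rcases h with ⟨_, v, _⟩ | ⟨v, _⟩ <;> exact absurd v.2 (by omega)

/-- in the behavior of `K_{n,m}(send, recv)`, a marking with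
exactly `k` tokens in the `off` places is reachable iff `k ≤ n` and
(`k = 0` or `m ≥ 1`). -/
theorem stmt18 (n m k : ℕ) :
    (∃ μ : KPlace n m → ℕ, Relation.ReflTransGen (kStep n m) (kInit n m) μ ∧
      (∑ u : Fin n, μ (Sum.inl (u, OncePlace.off))) = k) ↔
    (k ≤ n ∧ (k = 0 ∨ 1 ≤ m)) := by
  constructor
  · rintro ⟨μ, hreach, rfl⟩
    have hinv := invariant n m μ hreach
    constructor
    · calc (∑ u : Fin n, μ (Sum.inl (u, OncePlace.off)))
          ≤ ∑ _u : Fin n, 1 := Finset.sum_le_sum (fun u _ => by have := hinv u; omega)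
        _ = n := by simp
    · rcases Nat.eq_zero_or_pos m with hm | hm
      · left
        subst hm
        have : μ = kInit n 0 := by
          induction hreach with
          | refl => rfl
          | tail _ hstep _ => exact absurd hstep (by intro h; exact no_step_m0 _ _ _ h)
        subst this
        simp [kInit]
      · right; exact hm
  · rintro ⟨hk, h0 | hm⟩
    · subst h0
      exact ⟨kInit n m, Relation.ReflTransGen.refl, by simp [kInit]⟩
    · refine ⟨offMark n m k, offMark_reach n m k hk hm, ?_⟩
      simp only [offMark]
      rw [Fin.sum_univ_eq_sum_range (fun i => if i < k then 1 else 0)]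
      have hfun : (fun i => if i < k then (1:ℕ) else 0)
          = fun i => if i ∈ Finset.range k then 1 else 0 := by
        funext i; simp
      rw [hfun, Finset.sum_ite_mem]
      have : Finset.range n ∩ Finset.range k = Finset.range k := by
        ext i; simp; omega
      simp [this]
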